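/- Let K₁ ∈ B(H₁), K₂ ∈ B(H₂), let F₁ : Ω → H₁ be a continuous K₁-frame with bounds 0 < A₁ ≤ B₁ and F₂ : Ω → H₂ a continuous K₂-frame with bounds 0 < A₂ ≤ B₂, with transform operators θ₁, θ₂, and let θ be the transform operator of F₁ ⊕ F₂. If the topological closure of range θ₁ equals the orthogonal complement (range θ₂)ᗮ in L²(Ω, 𝕜), then F₁ ⊕ F₂ is a continuous (K₁ ⊕ K₂)-frame for H₁ ⊕ H₂ (with some positive bounds) and its pre-frame operator T = θ* is injective (i.e. F₁ ⊕ F₂ is a minimal continuous (K₁ ⊕ K₂)-frame). -/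

import Mathlib

/-!
Since `θ (u, v) = θ₁ u + θ₂ v` and the ranges of `θ₁` and `θ₂` are orthogonal, Pythagoras
splits the frame integral of `F₁ ⊕ F₂` into those of `F₁` and `F₂`, which gives the frame
bounds `min A₁ A₂` and `max B₁ B₂`. A vector killed by `θ*` is orthogonal to both ranges;
being orthogonal to `range θ₂` puts it in `closure (range θ₁) = (range θ₁)ᗮᗮ`, so it is
orthogonal to itself.
-/

open MeasureTheory ContinuousLinearMap

/-- The direct sum operator `K₁ ⊕ K₂` on the super Hilbert space `H₁ ⊕ H₂`, mapping
`(u, v)` to `(K₁ u, K₂ v)`. -/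
noncomputable def prodOp {𝕜 : Type*} [RCLike 𝕜]
    {H₁ : Type*} [NormedAddCommGroup H₁] [InnerProductSpace 𝕜 H₁]
    {H₂ : Type*} [NormedAddCommGroup H₂] [InnerProductSpace 𝕜 H₂]
    (K₁ : H₁ →L[𝕜] H₁) (K₂ : H₂ →L[𝕜] H₂) :
    WithLp 2 (H₁ × H₂) →L[𝕜] WithLp 2 (H₁ × H₂) :=
  ((WithLp.prodContinuousLinearEquiv 2 𝕜 H₁ H₂).symm.toContinuousLinearMap).comp
    ((K₁.prodMap K₂).comp (WithLp.prodContinuousLinearEquiv 2 𝕜 H₁ H₂).toContinuousLinearMap)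

lemma MeasureTheory.L2.integral_norm_sq_of_ae_eq {𝕜 : Type*} [RCLike 𝕜]
    {Ω : Type*} [MeasurableSpace Ω] {μ : Measure Ω}
    {f : Lp 𝕜 2 μ} {g : Ω → 𝕜} (h : (f : Ω → 𝕜) =ᵐ[μ] g) :
    ∫ ω, ‖g ω‖ ^ 2 ∂μ = ‖f‖ ^ 2 := by
  rw [← inner_self_eq_norm_sq (𝕜 := 𝕜) f, L2.inner_def,
    ← integral_re (L2.integrable_inner (𝕜 := 𝕜) f f)]
  refine integral_congr_ae (h.mono fun ω hω => ?_)
  dsimp only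
  rw [← hω, inner_self_eq_norm_sq]

section ProdOp

variable {𝕜 : Type*} [RCLike 𝕜]
  {H₁ : Type*} [NormedAddCommGroup H₁] [InnerProductSpace 𝕜 H₁]
  {H₂ : Type*} [NormedAddCommGroup H₂] [InnerProductSpace 𝕜 H₂]

lemma norm_prodOp_apply_sq (K₁ : H₁ →L[𝕜] H₁) (K₂ : H₂ →L[𝕜] H₂)
    (x : WithLp 2 (H₁ × H₂)) :
    ‖prodOp K₁ K₂ x‖ ^ 2 = ‖K₁ x.fst‖ ^ 2 + ‖K₂ x.snd‖ ^ 2 :=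
  WithLp.prod_norm_sq_eq_of_L2 _

lemma adjoint_prodOp [CompleteSpace H₁] [CompleteSpace H₂]
    (K₁ : H₁ →L[𝕜] H₁) (K₂ : H₂ →L[𝕜] H₂) :
    adjoint (prodOp K₁ K₂) = prodOp (adjoint K₁) (adjoint K₂) := by
  refine ((eq_adjoint_iff _ _).2 fun x y => ?_).symm
  simp only [WithLp.prod_inner_apply]
  exact congrArg₂ (· + ·) (adjoint_inner_left K₁ _ _) (adjoint_inner_left K₂ _ _)

end ProdOp

section OrthogonalRanges

variable {𝕜 : Type*} [RCLike 𝕜]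
  {E₁ : Type*} [NormedAddCommGroup E₁] [InnerProductSpace 𝕜 E₁]
  {E₂ : Type*} [NormedAddCommGroup E₂] [InnerProductSpace 𝕜 E₂]
  {F : Type*} [NormedAddCommGroup F] [InnerProductSpace 𝕜 F]
  {θ₁ : E₁ →L[𝕜] F} {θ₂ : E₂ →L[𝕜] F}

lemma inner_apply_eq_zero_of_closure_range_eq_orthogonal
    (h : (LinearMap.range θ₁.toLinearMap).topologicalClosure =
      (LinearMap.range θ₂.toLinearMap)ᗮ) (u : E₁) (v : E₂) :
    inner 𝕜 (θ₁ u) (θ₂ v) = 0 := by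
  have hu : θ₁ u ∈ (LinearMap.range θ₂.toLinearMap)ᗮ :=
    h ▸ (LinearMap.range θ₁.toLinearMap).le_topologicalClosure (LinearMap.mem_range_self _ u)
  exact inner_eq_zero_symm.1 (hu _ (LinearMap.mem_range_self _ v))

lemma norm_add_apply_sq_of_closure_range_eq_orthogonal
    (h : (LinearMap.range θ₁.toLinearMap).topologicalClosure =
      (LinearMap.range θ₂.toLinearMap)ᗮ) (u : E₁) (v : E₂) :
    ‖θ₁ u + θ₂ v‖ ^ 2 = ‖θ₁ u‖ ^ 2 + ‖θ₂ v‖ ^ 2 := by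
  simpa only [sq] using norm_add_sq_eq_norm_sq_add_norm_sq_of_inner_eq_zero _ _
    (inner_apply_eq_zero_of_closure_range_eq_orthogonal h u v)

lemma injective_adjoint_of_closure_range_eq_orthogonal
    [CompleteSpace E₁] [CompleteSpace E₂] [CompleteSpace F]
    (h : (LinearMap.range θ₁.toLinearMap).topologicalClosure =
      (LinearMap.range θ₂.toLinearMap)ᗮ)
    {θ : WithLp 2 (E₁ × E₂) →L[𝕜] F} (hθ : ∀ x, θ x = θ₁ x.fst + θ₂ x.snd) :
    Function.Injective (adjoint θ) := by
  have h₁ : LinearMap.range θ₁.toLinearMap ≤ LinearMap.range θ.toLinearMap := by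
    rintro _ ⟨u, rfl⟩
    exact ⟨WithLp.toLp 2 (u, 0), by simp [hθ]⟩
  have h₂ : LinearMap.range θ₂.toLinearMap ≤ LinearMap.range θ.toLinearMap := by
    rintro _ ⟨v, rfl⟩
    exact ⟨WithLp.toLp 2 (0, v), by simp [hθ]⟩
  refine LinearMap.ker_eq_bot.mp ?_
  rw [← orthogonal_range, eq_bot_iff]
  calc (LinearMap.range θ.toLinearMap)ᗮ
      ≤ (LinearMap.range θ₁.toLinearMap)ᗮ ⊓ (LinearMap.range θ₂.toLinearMap)ᗮ :=
        le_inf (Submodule.orthogonal_le h₁) (Submodule.orthogonal_le h₂)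
    _ = (LinearMap.range θ₁.toLinearMap)ᗮ ⊓ (LinearMap.range θ₁.toLinearMap)ᗮᗮ := by
        rw [← h, Submodule.orthogonal_orthogonal_eq_closure]
    _ = ⊥ := Submodule.inf_orthogonal_eq_bot _

end OrthogonalRanges

section TransformOp

variable {𝕜 : Type*} [RCLike 𝕜] {Ω : Type*} [MeasurableSpace Ω] {μ : Measure Ω}

def IsTransformOp {H : Type*} [NormedAddCommGroup H] [InnerProductSpace 𝕜 H]
    (μ : Measure Ω) (F : Ω → H) (θ : H →L[𝕜] Lp 𝕜 2 μ) : Prop :=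
  ∀ u, (θ u : Ω → 𝕜) =ᵐ[μ] fun ω => inner 𝕜 (F ω) u

lemma IsTransformOp.integral_norm_inner_sq {H : Type*} [NormedAddCommGroup H]
    [InnerProductSpace 𝕜 H] {F : Ω → H} {θ : H →L[𝕜] Lp 𝕜 2 μ} (hθ : IsTransformOp μ F θ)
    (u : H) : ∫ ω, ‖(inner 𝕜 (F ω) u : 𝕜)‖ ^ 2 ∂μ = ‖θ u‖ ^ 2 :=
  L2.integral_norm_sq_of_ae_eq (hθ u)

lemma IsTransformOp.prod_apply
    {H₁ : Type*} [NormedAddCommGroup H₁] [InnerProductSpace 𝕜 H₁]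
    {H₂ : Type*} [NormedAddCommGroup H₂] [InnerProductSpace 𝕜 H₂]
    {F₁ : Ω → H₁} {F₂ : Ω → H₂}
    {θ₁ : H₁ →L[𝕜] Lp 𝕜 2 μ} {θ₂ : H₂ →L[𝕜] Lp 𝕜 2 μ} {θ : WithLp 2 (H₁ × H₂) →L[𝕜] Lp 𝕜 2 μ}
    (hθ : IsTransformOp μ (fun ω => WithLp.toLp 2 (F₁ ω, F₂ ω)) θ)
    (hθ₁ : IsTransformOp μ F₁ θ₁) (hθ₂ : IsTransformOp μ F₂ θ₂)
    (x : WithLp 2 (H₁ × H₂)) :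
    θ x = θ₁ x.fst + θ₂ x.snd := by
  refine Lp.ext ?_
  filter_upwards [hθ x, hθ₁ x.fst, hθ₂ x.snd, Lp.coeFn_add (θ₁ x.fst) (θ₂ x.snd)]
    with ω h h₁ h₂ hadd
  rw [h, hadd, Pi.add_apply, h₁, h₂, WithLp.prod_inner_apply]
  rfl

end TransformOp

theorem prod_K_frame_minimal_of_closure_range_eq_orthogonal_general
    {𝕜 : Type*} [RCLike 𝕜]
    {H₁ : Type*} [NormedAddCommGroup H₁] [InnerProductSpace 𝕜 H₁] [CompleteSpace H₁]
    {H₂ : Type*} [NormedAddCommGroup H₂] [InnerProductSpace 𝕜 H₂] [CompleteSpace H₂]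
    {Ω : Type*} [MeasurableSpace Ω] {μ : Measure Ω}
    (K₁ : H₁ →L[𝕜] H₁) (K₂ : H₂ →L[𝕜] H₂)
    (F₁ : Ω → H₁) (F₂ : Ω → H₂)
    (A₁ B₁ A₂ B₂ : ℝ) (hA₁ : 0 < A₁) (hA₁B₁ : A₁ ≤ B₁) (hA₂ : 0 < A₂)
    (hframe₁ : ∀ u : H₁,
      A₁ * ‖ContinuousLinearMap.adjoint K₁ u‖ ^ 2 ≤
        ∫ ω, ‖(inner 𝕜 (F₁ ω) u : 𝕜)‖ ^ 2 ∂μ ∧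
      ∫ ω, ‖(inner 𝕜 (F₁ ω) u : 𝕜)‖ ^ 2 ∂μ ≤ B₁ * ‖u‖ ^ 2)
    (hframe₂ : ∀ v : H₂,
      A₂ * ‖ContinuousLinearMap.adjoint K₂ v‖ ^ 2 ≤
        ∫ ω, ‖(inner 𝕜 (F₂ ω) v : 𝕜)‖ ^ 2 ∂μ ∧
      ∫ ω, ‖(inner 𝕜 (F₂ ω) v : 𝕜)‖ ^ 2 ∂μ ≤ B₂ * ‖v‖ ^ 2)
    (θ₁ : H₁ →L[𝕜] Lp 𝕜 2 μ)
    (hθ₁ : ∀ u : H₁, (θ₁ u : Ω → 𝕜) =ᵐ[μ] fun ω => (inner 𝕜 (F₁ ω) u : 𝕜))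
    (θ₂ : H₂ →L[𝕜] Lp 𝕜 2 μ)
    (hθ₂ : ∀ v : H₂, (θ₂ v : Ω → 𝕜) =ᵐ[μ] fun ω => (inner 𝕜 (F₂ ω) v : 𝕜))
    (θ : WithLp 2 (H₁ × H₂) →L[𝕜] Lp 𝕜 2 μ)
    (hθ : ∀ x : WithLp 2 (H₁ × H₂), (θ x : Ω → 𝕜) =ᵐ[μ]
      fun ω => (inner 𝕜 ((WithLp.equiv 2 (H₁ × H₂)).symm (F₁ ω, F₂ ω)) x : 𝕜))
    (hclosure : (LinearMap.range θ₁.toLinearMap).topologicalClosure =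
      Submodule.orthogonal (LinearMap.range θ₂.toLinearMap)) :
    (∃ A B : ℝ, 0 < A ∧ A ≤ B ∧ ∀ x : WithLp 2 (H₁ × H₂),
      A * ‖ContinuousLinearMap.adjoint (prodOp K₁ K₂) x‖ ^ 2 ≤
        ∫ ω, ‖(inner 𝕜 ((WithLp.equiv 2 (H₁ × H₂)).symm (F₁ ω, F₂ ω)) x : 𝕜)‖ ^ 2 ∂μ ∧
      ∫ ω, ‖(inner 𝕜 ((WithLp.equiv 2 (H₁ × H₂)).symm (F₁ ω, F₂ ω)) x : 𝕜)‖ ^ 2 ∂μ ≤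
        B * ‖x‖ ^ 2) ∧
    Function.Injective ⇑(ContinuousLinearMap.adjoint θ) := by
  have hθ_apply := IsTransformOp.prod_apply hθ hθ₁ hθ₂
  refine ⟨⟨min A₁ A₂, max B₁ B₂, lt_min hA₁ hA₂,
    (min_le_left _ _).trans (hA₁B₁.trans (le_max_left _ _)), fun x => ?_⟩,
    injective_adjoint_of_closure_range_eq_orthogonal hclosure hθ_apply⟩
  obtain ⟨hlow₁, hup₁⟩ := hframe₁ x.fst
  obtain ⟨hlow₂, hup₂⟩ := hframe₂ x.snd
  rw [IsTransformOp.integral_norm_inner_sq hθ, hθ_apply,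
    norm_add_apply_sq_of_closure_range_eq_orthogonal hclosure,
    ← IsTransformOp.integral_norm_inner_sq hθ₁, ← IsTransformOp.integral_norm_inner_sq hθ₂,
    adjoint_prodOp, norm_prodOp_apply_sq, WithLp.prod_norm_sq_eq_of_L2 x]
  constructor
  · calc min A₁ A₂ * (‖adjoint K₁ x.fst‖ ^ 2 + ‖adjoint K₂ x.snd‖ ^ 2)
        ≤ A₁ * ‖adjoint K₁ x.fst‖ ^ 2 + A₂ * ‖adjoint K₂ x.snd‖ ^ 2 := by
          rw [mul_add]
          gcongr
          exacts [min_le_left _ _, min_le_right _ _]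
      _ ≤ _ := add_le_add hlow₁ hlow₂
  · calc _ ≤ B₁ * ‖x.fst‖ ^ 2 + B₂ * ‖x.snd‖ ^ 2 := add_le_add hup₁ hup₂
      _ ≤ max B₁ B₂ * (‖x.fst‖ ^ 2 + ‖x.snd‖ ^ 2) := by
          rw [mul_add]
          gcongr
          exacts [le_max_left _ _, le_max_right _ _]

/-- If `F₁` is a continuous `K₁`-frame, `F₂` a continuous `K₂`-frame, with transform
operators `θ₁, θ₂`, `θ` is the transform operator of `F₁ ⊕ F₂`, and the closure of
`range θ₁` equals `(range θ₂)ᗮ` in `L²(Ω, 𝕜)`, then `F₁ ⊕ F₂` is a continuous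
`(K₁ ⊕ K₂)`-frame (for some positive bounds) and its pre-frame operator `T = θ*` is
injective, i.e. `F₁ ⊕ F₂` is a minimal continuous `(K₁ ⊕ K₂)`-frame. -/
theorem prod_K_frame_minimal_of_closure_range_eq_orthogonal
    {𝕜 : Type*} [RCLike 𝕜] [MeasurableSpace 𝕜] [BorelSpace 𝕜]
    {H₁ : Type*} [NormedAddCommGroup H₁] [InnerProductSpace 𝕜 H₁] [CompleteSpace H₁]
    {H₂ : Type*} [NormedAddCommGroup H₂] [InnerProductSpace 𝕜 H₂] [CompleteSpace H₂]
    {Ω : Type*} [MeasurableSpace Ω] {μ : Measure Ω}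
    (K₁ : H₁ →L[𝕜] H₁) (K₂ : H₂ →L[𝕜] H₂)
    (F₁ : Ω → H₁) (F₂ : Ω → H₂)
    (A₁ B₁ A₂ B₂ : ℝ) (hA₁ : 0 < A₁) (hA₁B₁ : A₁ ≤ B₁) (hA₂ : 0 < A₂) (hA₂B₂ : A₂ ≤ B₂)
    (hmeas₁ : ∀ u : H₁, Measurable fun ω => (inner 𝕜 (F₁ ω) u : 𝕜))
    (hframe₁ : ∀ u : H₁,
      A₁ * ‖ContinuousLinearMap.adjoint K₁ u‖ ^ 2 ≤
        ∫ ω, ‖(inner 𝕜 (F₁ ω) u : 𝕜)‖ ^ 2 ∂μ ∧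
      ∫ ω, ‖(inner 𝕜 (F₁ ω) u : 𝕜)‖ ^ 2 ∂μ ≤ B₁ * ‖u‖ ^ 2)
    (hmeas₂ : ∀ v : H₂, Measurable fun ω => (inner 𝕜 (F₂ ω) v : 𝕜))
    (hframe₂ : ∀ v : H₂,
      A₂ * ‖ContinuousLinearMap.adjoint K₂ v‖ ^ 2 ≤
        ∫ ω, ‖(inner 𝕜 (F₂ ω) v : 𝕜)‖ ^ 2 ∂μ ∧
      ∫ ω, ‖(inner 𝕜 (F₂ ω) v : 𝕜)‖ ^ 2 ∂μ ≤ B₂ * ‖v‖ ^ 2)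
    (θ₁ : H₁ →L[𝕜] Lp 𝕜 2 μ)
    (hθ₁ : ∀ u : H₁, (θ₁ u : Ω → 𝕜) =ᵐ[μ] fun ω => (inner 𝕜 (F₁ ω) u : 𝕜))
    (θ₂ : H₂ →L[𝕜] Lp 𝕜 2 μ)
    (hθ₂ : ∀ v : H₂, (θ₂ v : Ω → 𝕜) =ᵐ[μ] fun ω => (inner 𝕜 (F₂ ω) v : 𝕜))
    (θ : WithLp 2 (H₁ × H₂) →L[𝕜] Lp 𝕜 2 μ)
    (hθ : ∀ x : WithLp 2 (H₁ × H₂), (θ x : Ω → 𝕜) =ᵐ[μ]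
      fun ω => (inner 𝕜 ((WithLp.equiv 2 (H₁ × H₂)).symm (F₁ ω, F₂ ω)) x : 𝕜))
    (hclosure : (LinearMap.range θ₁.toLinearMap).topologicalClosure =
      Submodule.orthogonal (LinearMap.range θ₂.toLinearMap)) :
    (∃ A B : ℝ, 0 < A ∧ A ≤ B ∧ ∀ x : WithLp 2 (H₁ × H₂),
      A * ‖ContinuousLinearMap.adjoint (prodOp K₁ K₂) x‖ ^ 2 ≤
        ∫ ω, ‖(inner 𝕜 ((WithLp.equiv 2 (H₁ × H₂)).symm (F₁ ω, F₂ ω)) x : 𝕜)‖ ^ 2 ∂μ ∧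
      ∫ ω, ‖(inner 𝕜 ((WithLp.equiv 2 (H₁ × H₂)).symm (F₁ ω, F₂ ω)) x : 𝕜)‖ ^ 2 ∂μ ≤
        B * ‖x‖ ^ 2) ∧
    Function.Injective ⇑(ContinuousLinearMap.adjoint θ) :=
  prod_K_frame_minimal_of_closure_range_eq_orthogonal_general K₁ K₂ F₁ F₂ A₁ B₁ A₂ B₂ hA₁ hA₁B₁ hA₂
    hframe₁ hframe₂ θ₁ hθ₁ θ₂ hθ₂ θ hθ hclosure
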